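/- For every r > 0 the superconducting-band density expression d^{(s)}(r) := 1 + (μ_s − λ_s)·G_0(r) + (μ_s − 2λ − λ_s)·G_1(r) + (μ_s − 4λ − λ_s)·G_2(r) satisfies 0 ≤ d^{(s)}(r) ≤ 2. -/

import Mathlib

open Real Filter

/-- `g_{r,x} := sqrt((x + λ_s − μ_s)² + γ_s²·r)`. -/
noncomputable def gg (gams lams mus r x : ℝ) : ℝ :=
  Real.sqrt ((x + lams - mus) ^ 2 + gams ^ 2 * r)

/-- The function `f` from Theorem 1 of the paper. Parameters:
`beta` = β, `gams` = γ_s, `lams` = λ_s, `lamf` = λ_f, `lam` = λ,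
`mus` = μ_s, `muf` = μ_f, `hs` = h_s, `hf` = h_f, `eta` = η. -/
noncomputable def ff (beta gams lams lamf lam mus muf hs hf eta r : ℝ) : ℝ :=
  (Real.exp (-(beta * muf)) + Real.exp (-(beta * (4 * lam + 2 * lamf - muf))))
      * Real.cosh (beta * hs)
    + Real.exp (-(beta * (2 * lam - hs))) * Real.cosh (beta * (eta + hf))
    + Real.exp (-(beta * (2 * lam + hs))) * Real.cosh (beta * (eta - hf))
    + Real.exp (-(beta * (lams + muf))) * Real.cosh (beta * gg gams lams mus r 0)
    + Real.exp (-(beta * (4 * lam + lams + 2 * lamf - muf)))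
      * Real.cosh (beta * gg gams lams mus r (4 * lam))
    + 2 * Real.exp (-(beta * (2 * lam + lams))) * Real.cosh (beta * hf)
      * Real.cosh (beta * gg gams lams mus r (2 * lam))

/-- The variational functional `F(r) := −γ_s·r + β⁻¹·ln f(r)`. -/
noncomputable def FF (beta gams lams lamf lam mus muf hs hf eta r : ℝ) : ℝ :=
  -(gams * r) + beta⁻¹ * Real.log (ff beta gams lams lamf lam mus muf hs hf eta r)

/-- `G_0`. -/
noncomputable def G0 (beta gams lams lamf lam mus muf hs hf eta r : ℝ) : ℝ :=
  Real.sinh (beta * gg gams lams mus r 0) /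
    (ff beta gams lams lamf lam mus muf hs hf eta r * Real.exp (beta * (lams + muf))
      * gg gams lams mus r 0)

/-- `G_1`. -/
noncomputable def G1 (beta gams lams lamf lam mus muf hs hf eta r : ℝ) : ℝ :=
  2 * Real.cosh (beta * hf) * Real.sinh (beta * gg gams lams mus r (2 * lam)) /
    (ff beta gams lams lamf lam mus muf hs hf eta r * Real.exp (beta * (2 * lam + lams))
      * gg gams lams mus r (2 * lam))

/-- `G_2`. -/
noncomputable def G2 (beta gams lams lamf lam mus muf hs hf eta r : ℝ) : ℝ :=
  Real.sinh (beta * gg gams lams mus r (4 * lam)) /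
    (ff beta gams lams lamf lam mus muf hs hf eta r
      * Real.exp (beta * (4 * lam + lams + 2 * lamf - muf))
      * gg gams lams mus r (4 * lam))

/-! Write `d⁽ˢ⁾(r) = 1 + t₀ + t₁ + t₂`. The term `tᵢ` is `wᵢ/f · (c/g) · sinh(βg)`, where
`wᵢ cosh(βg)` is one of the three `g`-dependent summands of `f` and `c = μ_s − x − λ_s` satisfies
`|c| ≤ g = g_{r,x}`. Hence `|tᵢ| ≤ wᵢ cosh(βg)/f`, and summing, `|t₀ + t₁ + t₂|` is at most the
share of `f` carried by those summands, which is at most `1` because the other summands of `f`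
are positive. -/

lemma Real.abs_sinh_le_cosh (x : ℝ) : |sinh x| ≤ cosh x := by
  rw [abs_sinh, ← cosh_abs]
  exact (sinh_lt_cosh _).le

lemma abs_mul_sinh_div_le {c g : ℝ} (β w f e : ℝ) (hw : 0 ≤ w) (hf : 0 ≤ f) (he : 0 ≤ e)
    (hc : |c| ≤ g) :
    |c * (w * sinh (β * g) / (f * e * g))| ≤ w * cosh (β * g) / e / f := by
  have hcg : |c / g| ≤ 1 := by
    rw [abs_div, abs_of_nonneg ((abs_nonneg c).trans hc)]
    exact div_le_one_of_le₀ hc ((abs_nonneg c).trans hc)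
  calc |c * (w * sinh (β * g) / (f * e * g))|
      = |c / g| * (w / e / f) * |sinh (β * g)| := by
        rw [show c * (w * sinh (β * g) / (f * e * g)) = c / g * (w / e / f) * sinh (β * g) by
          ring, abs_mul, abs_mul, abs_of_nonneg (by positivity : 0 ≤ w / e / f)]
    _ ≤ 1 * (w / e / f) * cosh (β * g) := by
        gcongr
        exact abs_sinh_le_cosh _
    _ = w * cosh (β * g) / e / f := by ring

section

variable {beta gams lams lamf lam mus muf hs hf eta r : ℝ}

lemma abs_sub_le_gg (hr : 0 ≤ r) (x : ℝ) : |mus - x - lams| ≤ gg gams lams mus r x := by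
  rw [gg, ← sqrt_sq_eq_abs]
  exact sqrt_le_sqrt (by nlinarith [sq_nonneg gams])

lemma ff_pos : 0 < ff beta gams lams lamf lam mus muf hs hf eta r := by
  unfold ff
  have := cosh_pos
  positivity

lemma superconducting_part_le_ff :
    cosh (beta * gg gams lams mus r 0) / exp (beta * (lams + muf))
      + 2 * cosh (beta * hf) * cosh (beta * gg gams lams mus r (2 * lam))
        / exp (beta * (2 * lam + lams))
      + cosh (beta * gg gams lams mus r (4 * lam)) / exp (beta * (4 * lam + lams + 2 * lamf - muf))
      ≤ ff beta gams lams lamf lam mus muf hs hf eta r := by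
  have normal_part_nonneg :
      0 ≤ (exp (-(beta * muf)) + exp (-(beta * (4 * lam + 2 * lamf - muf)))) * cosh (beta * hs)
        + exp (-(beta * (2 * lam - hs))) * cosh (beta * (eta + hf))
        + exp (-(beta * (2 * lam + hs))) * cosh (beta * (eta - hf)) := by
    have := cosh_pos
    positivity
  simp only [ff, exp_neg, div_eq_mul_inv] at normal_part_nonneg ⊢
  linarith

end

theorem density_s_bounds_general (beta gams lams lamf lam mus muf hs hf eta : ℝ) :
    ∀ r : ℝ, 0 < r →
      0 ≤ 1 + (mus - lams) * G0 beta gams lams lamf lam mus muf hs hf eta r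
          + (mus - 2 * lam - lams) * G1 beta gams lams lamf lam mus muf hs hf eta r
          + (mus - 4 * lam - lams) * G2 beta gams lams lamf lam mus muf hs hf eta r ∧
      1 + (mus - lams) * G0 beta gams lams lamf lam mus muf hs hf eta r
          + (mus - 2 * lam - lams) * G1 beta gams lams lamf lam mus muf hs hf eta r
          + (mus - 4 * lam - lams) * G2 beta gams lams lamf lam mus muf hs hf eta r ≤ 2 := by
  intro r hr
  set f := ff beta gams lams lamf lam mus muf hs hf eta r
  have hf_pos : 0 < f := ff_pos
  have hc : ∀ x, |mus - x - lams| ≤ gg gams lams mus r x := abs_sub_le_gg hr.le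
  have h0 := abs_mul_sinh_div_le beta 1 f (exp (beta * (lams + muf))) zero_le_one hf_pos.le
    (exp_pos _).le (by simpa using hc 0)
  have h1 := abs_mul_sinh_div_le beta (2 * cosh (beta * hf)) f (exp (beta * (2 * lam + lams)))
    (by positivity) hf_pos.le (exp_pos _).le (hc (2 * lam))
  have h2 := abs_mul_sinh_div_le beta 1 f (exp (beta * (4 * lam + lams + 2 * lamf - muf)))
    zero_le_one hf_pos.le (exp_pos _).le (hc (4 * lam))
  simp only [one_mul] at h0 h2
  have hdev : |(mus - lams) * G0 beta gams lams lamf lam mus muf hs hf eta r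
      + (mus - 2 * lam - lams) * G1 beta gams lams lamf lam mus muf hs hf eta r
      + (mus - 4 * lam - lams) * G2 beta gams lams lamf lam mus muf hs hf eta r| ≤ 1 :=
    calc _ ≤ _ := abs_add_three _ _ _
      _ ≤ _ := add_le_add_three h0 h1 h2
      _ = _ := by rw [← add_div, ← add_div]
      _ ≤ 1 := div_le_one_of_le₀ superconducting_part_le_ff hf_pos.le
  constructor <;> linarith [abs_le.mp hdev]

/-- for every `r > 0` the superconducting-band density expression
lies in `[0, 2]`. -/
theorem density_s_bounds (beta gams lams lamf lam mus muf hs hf eta : ℝ) (hbeta : 0 < beta) (hgams : 0 < gams) (hlams : 0 ≤ lams) (hlamf : 0 ≤ lamf) (hlam : 0 ≤ lam) :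
    ∀ r : ℝ, 0 < r →
      0 ≤ 1 + (mus - lams) * G0 beta gams lams lamf lam mus muf hs hf eta r
          + (mus - 2 * lam - lams) * G1 beta gams lams lamf lam mus muf hs hf eta r
          + (mus - 4 * lam - lams) * G2 beta gams lams lamf lam mus muf hs hf eta r ∧
      1 + (mus - lams) * G0 beta gams lams lamf lam mus muf hs hf eta r
          + (mus - 2 * lam - lams) * G1 beta gams lams lamf lam mus muf hs hf eta r
          + (mus - 4 * lam - lams) * G2 beta gams lams lamf lam mus muf hs hf eta r ≤ 2 :=
  density_s_bounds_general beta gams lams lamf lam mus muf hs hf eta
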